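/- Let G be a finite group, F a field of characteristic p > 0, and P a p-subgroup of G. Then the F-span of class sums C⁺ with δ(C) strictly contained (up to G-conjugacy) in P, denoted Ĩ_G(P), is an ideal of Z(FG) contained in I_G(P). -/

import Mathlib

/-!
Let `a` be central and `δ(D) <_G P`.
The coefficient of `e ∈ C` in `a D⁺` is `∑_{d ∈ D} a(e d⁻¹)`, and a Sylow `p`-subgroup `Q` of
`C_G(e)` (a defect group of `C`) permutes its terms by conjugation, so in characteristic `p` only
the `Q`-fixed `d` contribute. Hence if `C` occurs in `a D⁺`, then `Q` centralizes some `d ∈ D`,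
so `Q` is conjugate into a defect group of `D` and `δ(C) <_G P`.
-/

set_option synthInstance.maxHeartbeats 400000

set_option synthInstance.maxHeartbeats 400000

/-- The class sum `C⁺ = ∑_{x ∈ C} x` of a conjugacy class `C` of `G`. -/
noncomputable def classSum (F : Type*) [Field F] (G : Type*) [Group G] [Fintype G]
    (C : ConjClasses G) : MonoidAlgebra F G :=
  ∑ x ∈ (Set.toFinite C.carrier).toFinset, MonoidAlgebra.single x (1 : F)

/-- `D` is a defect group of the conjugacy class `C`: a Sylow `p`-subgroup of the centralizer
`C_G(x)` of some `x ∈ C`, viewed as a subgroup of `G`. -/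
def IsDefectGroup (p : ℕ) {G : Type*} [Group G] (C : ConjClasses G) (D : Subgroup G) : Prop :=
  ∃ x ∈ C.carrier, ∃ Q : Sylow p ↥(Subgroup.centralizer {x}),
    D = Subgroup.map (Subgroup.centralizer {x}).subtype Q.toSubgroup

/-- `δ(C) ≤_G P`: some defect group of `C` has a `G`-conjugate contained in `P`. -/
def DefectLE (p : ℕ) {G : Type*} [Group G] (C : ConjClasses G) (P : Subgroup G) : Prop :=
  ∃ D : Subgroup G, IsDefectGroup p C D ∧
    ∃ g : G, Subgroup.map (MulAut.conj g).toMonoidHom D ≤ P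

/-- The `F`-span `I_G(P)` of the class sums `C⁺` with `δ(C) ≤_G P`. -/
noncomputable def IGP (F : Type*) [Field F] (p : ℕ) (G : Type*) [Group G] [Fintype G]
    (P : Subgroup G) : Submodule F (MonoidAlgebra F G) :=
  Submodule.span F {z | ∃ C : ConjClasses G, DefectLE p C P ∧ z = classSum F G C}

/-- `δ(C) <_G P`: some defect group of `C` has a `G`-conjugate properly contained in `P`. -/
def DefectLT (p : ℕ) {G : Type*} [Group G] (C : ConjClasses G) (P : Subgroup G) : Prop :=
  ∃ D : Subgroup G, IsDefectGroup p C D ∧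
    ∃ g : G, Subgroup.map (MulAut.conj g).toMonoidHom D < P

/-- The `F`-span `Ĩ_G(P)` of the class sums `C⁺` with `δ(C) <_G P`. -/
noncomputable def IGPlt (F : Type*) [Field F] (p : ℕ) (G : Type*) [Group G] [Fintype G]
    (P : Subgroup G) : Submodule F (MonoidAlgebra F G) :=
  Submodule.span F {z | ∃ C : ConjClasses G, DefectLT p C P ∧ z = classSum F G C}

open MulAction in
lemma IsPGroup.sum_eq_zero_of_eq_zero_on_fixedPoints {p : ℕ} [Fact p.Prime]
    {Q α R : Type*} [Group Q] [MulAction Q α] [Fintype α] [CommRing R] [CharP R p]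
    (hQ : IsPGroup p Q) (f : α → R) (hf : ∀ (g : Q) (x : α), f (g • x) = f x)
    (hfix : ∀ x ∈ fixedPoints Q α, f x = 0) :
    ∑ x, f x = 0 := by
  classical
  rw [← Finset.sum_fiberwise Finset.univ (Quotient.mk (orbitRel Q α))]
  refine Finset.sum_eq_zero fun ω _ => ?_
  induction ω using Quotient.inductionOn with | h x₀ => ?_
  have hfiber : (Finset.univ.filter fun x => Quotient.mk (orbitRel Q α) x = ⟦x₀⟧)
      = (orbit Q x₀).toFinset := by
    ext x
    simp [Quotient.eq, orbitRel_apply]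
  have hconst : ∀ x ∈ orbit Q x₀, f x = f x₀ := by
    rintro - ⟨g, rfl⟩
    exact hf g x₀
  rw [hfiber, Finset.sum_congr rfl fun x hx => hconst x (Set.mem_toFinset.1 hx),
    Finset.sum_const, nsmul_eq_mul]
  by_cases hx₀ : x₀ ∈ fixedPoints Q α
  · rw [hfix x₀ hx₀, mul_zero]
  · obtain ⟨n, hn⟩ := hQ.card_orbit x₀
    have hn0 : n ≠ 0 := by
      rintro rfl
      rw [pow_zero, Nat.card_eq_fintype_card] at hn
      exact hx₀ (mem_fixedPoints_iff_card_orbit_eq_one.2 hn)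
    rw [Set.toFinset_card, ← Nat.card_eq_fintype_card, hn, Nat.cast_pow, CharP.cast_eq_zero,
      zero_pow hn0, zero_mul]

namespace MonoidAlgebra

variable {R G : Type*} [Group G]

lemma coeff_mul_eq_sum [Semiring R] [Fintype G] (x y : MonoidAlgebra R G) (g : G) :
    (x * y).coeff g = ∑ h, x.coeff (g * h⁻¹) * y.coeff h := by
  rw [coeff_mul_apply_right, Finsupp.sum_fintype]
  simp

lemma mem_center_iff_coeff_conj [CommSemiring R] {z : MonoidAlgebra R G} :
    z ∈ Subalgebra.center R (MonoidAlgebra R G) ↔ ∀ g x, z.coeff (g * x * g⁻¹) = z.coeff x := by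
  rw [Subalgebra.mem_center_iff]
  constructor
  · intro hz g x
    have h := congrArg (fun w : MonoidAlgebra R G => w.coeff (g * x)) (hz (single g 1))
    simpa using h.symm
  · intro hz b
    induction b using MonoidAlgebra.induction_on with
    | of g =>
      ext x
      simpa [mul_assoc] using (hz g (g⁻¹ * x)).symm
    | add b c hb hc => rw [add_mul, mul_add, hb, hc]
    | smul r b hb => rw [smul_mul_assoc, mul_smul_comm, hb]

end MonoidAlgebra

lemma ConjClasses.conj_mem_carrier_iff {G : Type*} [Group G] {C : ConjClasses G} (g x : G) :
    g * x * g⁻¹ ∈ C.carrier ↔ x ∈ C.carrier := by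
  simp only [ConjClasses.mem_carrier_iff_mk_eq]
  rw [ConjClasses.mk_eq_mk_iff_isConj.2 (isConj_iff.2 ⟨g, rfl⟩).symm]

lemma ConjClasses.out_mem_carrier {G : Type*} [Group G] (C : ConjClasses G) :
    Quotient.out C ∈ C.carrier := by
  rw [ConjClasses.mem_carrier_iff_mk_eq, ← ConjClasses.quotient_mk_eq_mk]
  exact Quotient.out_eq (s := IsConj.setoid G) C

lemma ConjClasses.indicator_carrier_conj {G M : Type*} [Group G] [Zero M] [One M]
    {C : ConjClasses G} (g x : G) :
    C.carrier.indicator (1 : G → M) (g * x * g⁻¹) = C.carrier.indicator 1 x := by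
  by_cases hx : x ∈ C.carrier
  · rw [Set.indicator_of_mem hx, Set.indicator_of_mem ((conj_mem_carrier_iff g x).2 hx)]
    rfl
  · rw [Set.indicator_of_notMem hx, Set.indicator_of_notMem (mt (conj_mem_carrier_iff g x).1 hx)]

section ClassSum

variable {F : Type*} [Field F] {G : Type*} [Group G] [Fintype G]

lemma coeff_classSum (C : ConjClasses G) : ⇑(classSum F G C).coeff = C.carrier.indicator 1 := by
  classical
  ext g
  simp [classSum, MonoidAlgebra.coeff_sum, Finsupp.single_apply, Set.indicator_apply]

lemma classSum_mem_center (C : ConjClasses G) :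
    classSum F G C ∈ Subalgebra.center F (MonoidAlgebra F G) := by
  rw [MonoidAlgebra.mem_center_iff_coeff_conj, coeff_classSum]
  exact ConjClasses.indicator_carrier_conj

lemma mem_span_classSum_of_mem_center {z : MonoidAlgebra F G}
    (hz : z ∈ Subalgebra.center F (MonoidAlgebra F G)) (S : ConjClasses G → Prop)
    (hS : ∀ C : ConjClasses G, ∀ e ∈ C.carrier, z.coeff e ≠ 0 → S C) :
    z ∈ Submodule.span F {w | ∃ C, S C ∧ w = classSum F G C} := by
  classical
  have hexp : z = ∑ C : ConjClasses G, z.coeff (Quotient.out C) • classSum F G C := by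
    ext g
    rw [MonoidAlgebra.coeff_sum, Finset.sum_apply',
      Finset.sum_eq_single (ConjClasses.mk g) _ (by simp)]
    · obtain ⟨c, hc⟩ := isConj_iff.1 (ConjClasses.mk_eq_mk_iff_isConj.1
        (ConjClasses.mem_carrier_iff_mk_eq.1 (ConjClasses.mk g).out_mem_carrier))
      have hzg := MonoidAlgebra.mem_center_iff_coeff_conj.1 hz c (Quotient.out (ConjClasses.mk g))
      rw [hc] at hzg
      rw [MonoidAlgebra.coeff_smul_apply, coeff_classSum, Set.indicator_of_mem
        ConjClasses.mem_carrier_mk, Pi.one_apply, smul_eq_mul, mul_one, hzg]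
    · intro C _ hC
      rw [MonoidAlgebra.coeff_smul_apply, coeff_classSum, Set.indicator_of_notMem
        (fun h => hC (ConjClasses.mem_carrier_iff_mk_eq.1 h).symm), smul_zero]
  rw [hexp]
  refine Submodule.sum_mem _ fun C _ => ?_
  by_cases h0 : z.coeff (Quotient.out C) = 0
  · rw [h0, zero_smul]
    exact Submodule.zero_mem _
  · exact Submodule.smul_mem _ _
      (Submodule.subset_span ⟨C, hS C _ C.out_mem_carrier h0, rfl⟩)

end ClassSum

section DefectGroup

variable {G : Type*} [Group G] {p : ℕ} [Fact p.Prime]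

lemma Subgroup.map_conj_map_conj (a b : G) (K : Subgroup G) :
    (K.map (MulAut.conj b).toMonoidHom).map (MulAut.conj a).toMonoidHom
      = K.map (MulAut.conj (a * b)).toMonoidHom := by
  rw [Subgroup.map_map]
  congr 1
  ext x
  simp [MulAut.conj_apply, mul_assoc]

lemma Sylow.exists_map_conj_le_map_subtype [Finite G] {H : Subgroup G} (R : Sylow p H)
    {K : Subgroup G} (hK : IsPGroup p K) (hKH : K ≤ H) :
    ∃ h : H, K.map (MulAut.conj (h : G)).toMonoidHom ≤ (R : Subgroup H).map H.subtype := by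
  obtain ⟨R', hKR'⟩ := (hK.comap_subtype (K := H)).exists_le_sylow
  obtain ⟨h, rfl⟩ := MulAction.exists_smul_eq H R' R
  refine ⟨h, ?_⟩
  have hmap : ((h • R' : Sylow p H) : Subgroup H).map H.subtype
      = ((R' : Subgroup H).map H.subtype).map (MulAut.conj (h : G)).toMonoidHom := by
    ext y
    constructor
    · rintro ⟨_, ⟨x, hx, rfl⟩, rfl⟩
      exact ⟨x, ⟨x, hx, rfl⟩, rfl⟩
    · rintro ⟨_, ⟨x, hx, rfl⟩, rfl⟩
      exact ⟨_, ⟨x, hx, rfl⟩, rfl⟩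
  rw [hmap]
  apply Subgroup.map_mono
  have := Subgroup.map_mono (f := H.subtype) hKR'
  rwa [Subgroup.map_comap_eq, Subgroup.range_subtype, inf_eq_right.2 hKH] at this

lemma IsDefectGroup.exists_map_conj_le [Finite G] {C : ConjClasses G} {D : Subgroup G}
    (hD : IsDefectGroup p C D) {K : Subgroup G} (hK : IsPGroup p K) {d : G}
    (hd : d ∈ C.carrier) (hKd : K ≤ Subgroup.centralizer {d}) :
    ∃ g : G, K.map (MulAut.conj g).toMonoidHom ≤ D := by
  obtain ⟨x, hx, R, rfl⟩ := hD
  obtain ⟨c, rfl⟩ : ∃ c, c * d * c⁻¹ = x := isConj_iff.1 (ConjClasses.mk_eq_mk_iff_isConj.1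
    ((ConjClasses.mem_carrier_iff_mk_eq.1 hd).trans (ConjClasses.mem_carrier_iff_mk_eq.1 hx).symm))
  have hcK : K.map (MulAut.conj c).toMonoidHom ≤ Subgroup.centralizer {c * d * c⁻¹} :=
    calc K.map (MulAut.conj c).toMonoidHom
        ≤ (Subgroup.centralizer {d}).map (MulAut.conj c).toMonoidHom := Subgroup.map_mono hKd
      _ ≤ Subgroup.centralizer ((MulAut.conj c).toMonoidHom '' {d}) :=
        Subgroup.map_centralizer_le_centralizer_image _ _
      _ = Subgroup.centralizer {c * d * c⁻¹} := by simp [MulAut.conj_apply]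
  obtain ⟨h, hh⟩ := R.exists_map_conj_le_map_subtype (hK.map _) hcK
  exact ⟨h * c, by rwa [← Subgroup.map_conj_map_conj]⟩

end DefectGroup

section Ideal

variable {F : Type*} [Field F] {p : ℕ} [Fact p.Prime] [CharP F p] {G : Type*} [Group G]
  [Fintype G]

/-- The coefficient of `e` is a sum over `D` whose terms `Q` permutes by conjugation, so in
characteristic `p` only the `Q`-fixed points of `D` can contribute. -/
lemma exists_le_centralizer_of_coeff_mul_classSum_ne_zero {a : MonoidAlgebra F G}
    (ha : a ∈ Subalgebra.center F (MonoidAlgebra F G)) {Q : Subgroup G} (hQ : IsPGroup p Q)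
    {e : G} (hQe : Q ≤ Subgroup.centralizer {e}) (D : ConjClasses G)
    (h : (a * classSum F G D).coeff e ≠ 0) :
    ∃ d ∈ D.carrier, Q ≤ Subgroup.centralizer {d} := by
  by_contra! hno
  apply h
  rw [MonoidAlgebra.coeff_mul_eq_sum, coeff_classSum]
  let Q' := Q.comap (ConjAct.ofConjAct : ConjAct G ≃* G).toMonoidHom
  have hQ' : IsPGroup p Q' := hQ.comap_of_injective _ ConjAct.ofConjAct.injective
  refine hQ'.sum_eq_zero_of_eq_zero_on_fixedPoints _ ?_ ?_
  · rintro ⟨q, hq⟩ x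
    have hqe : ConjAct.ofConjAct q * e = e * ConjAct.ofConjAct q :=
      Subgroup.mem_centralizer_singleton_iff.1 (hQe hq)
    have hconj : e * (ConjAct.ofConjAct q * x * (ConjAct.ofConjAct q)⁻¹)⁻¹
        = ConjAct.ofConjAct q * (e * x⁻¹) * (ConjAct.ofConjAct q)⁻¹ := by
      simp only [mul_inv_rev, inv_inv, ← mul_assoc, ← hqe]
    simp only [Subgroup.mk_smul, ConjAct.smul_def, hconj,
      MonoidAlgebra.mem_center_iff_coeff_conj.1 ha]
    rw [ConjClasses.indicator_carrier_conj]
  · intro x hx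
    have hQx : Q ≤ Subgroup.centralizer {x} := by
      intro q hq
      have hfix := MulAction.mem_fixedPoints.1 hx ⟨ConjAct.toConjAct q, hq⟩
      change ConjAct.toConjAct q • x = x at hfix
      rw [ConjAct.smul_def, ConjAct.ofConjAct_toConjAct] at hfix
      rw [Subgroup.mem_centralizer_singleton_iff]
      calc q * x = q * x * q⁻¹ * q := by group
        _ = x * q := by rw [hfix]
    by_cases hxD : x ∈ D.carrier
    · exact absurd hQx (hno x hxD)
    · rw [Set.indicator_of_notMem hxD, mul_zero]

lemma defectLT_of_coeff_mul_classSum_ne_zero {P : Subgroup G} {a : MonoidAlgebra F G}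
    (ha : a ∈ Subalgebra.center F (MonoidAlgebra F G)) {D : ConjClasses G} (hD : DefectLT p D P)
    {C : ConjClasses G} {e : G} (he : e ∈ C.carrier) (h : (a * classSum F G D).coeff e ≠ 0) :
    DefectLT p C P := by
  obtain ⟨R⟩ := (inferInstance : Nonempty (Sylow p (Subgroup.centralizer {e})))
  have hRp : IsPGroup p ((R : Subgroup _).map (Subgroup.centralizer {e}).subtype) :=
    R.isPGroup'.map _
  obtain ⟨d, hdD, hRd⟩ := exists_le_centralizer_of_coeff_mul_classSum_ne_zero ha hRp
    (Subgroup.map_subtype_le _) D h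
  obtain ⟨D₀, hD₀, g, hg⟩ := hD
  obtain ⟨v, hv⟩ := hD₀.exists_map_conj_le hRp hdD hRd
  refine ⟨_, ⟨e, he, R, rfl⟩, g * v, ?_⟩
  rw [← Subgroup.map_conj_map_conj]
  exact (Subgroup.map_mono hv).trans_lt hg

lemma mul_mem_IGPlt (P : Subgroup G) {a : MonoidAlgebra F G}
    (ha : a ∈ Subalgebra.center F (MonoidAlgebra F G)) {z : MonoidAlgebra F G}
    (hz : z ∈ IGPlt F p G P) : a * z ∈ IGPlt F p G P := by
  induction hz using Submodule.span_induction with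
  | mem x hx =>
    obtain ⟨D, hD, rfl⟩ := hx
    exact mem_span_classSum_of_mem_center (mul_mem ha (classSum_mem_center D)) _
      fun C e he h => defectLT_of_coeff_mul_classSum_ne_zero ha hD he h
  | zero => rw [mul_zero]; exact Submodule.zero_mem _
  | add x y _ _ hx hy => rw [mul_add]; exact Submodule.add_mem _ hx hy
  | smul r x _ hx => rw [mul_smul_comm]; exact Submodule.smul_mem _ _ hx

end Ideal

lemma IGPlt_le_center (F : Type*) [Field F] (p : ℕ) (G : Type*) [Group G] [Fintype G]
    (P : Subgroup G) :
    IGPlt F p G P ≤ Subalgebra.toSubmodule (Subalgebra.center F (MonoidAlgebra F G)) := by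
  rw [IGPlt, Submodule.span_le]
  rintro - ⟨C, -, rfl⟩
  exact classSum_mem_center C

lemma IGPlt_le_IGP (F : Type*) [Field F] (p : ℕ) (G : Type*) [Group G] [Fintype G]
    (P : Subgroup G) : IGPlt F p G P ≤ IGP F p G P :=
  Submodule.span_mono fun _ ⟨C, ⟨D, hD, g, hg⟩, hz⟩ => ⟨C, ⟨D, hD, g, hg.le⟩, hz⟩

theorem stmt_9_general (F : Type*) [Field F] (p : ℕ) [Fact p.Prime] [CharP F p]
    (G : Type*) [Group G] [Fintype G] (P : Subgroup G) :
    (∀ z ∈ IGPlt F p G P, z ∈ Subalgebra.center F (MonoidAlgebra F G)) ∧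
    (∀ a ∈ Subalgebra.center F (MonoidAlgebra F G), ∀ z ∈ IGPlt F p G P,
      a * z ∈ IGPlt F p G P) ∧
    IGPlt F p G P ≤ IGP F p G P :=
  ⟨fun _ hz => IGPlt_le_center F p G P hz, fun _ ha _ hz => mul_mem_IGPlt P ha hz,
    IGPlt_le_IGP F p G P⟩

/-- `Ĩ_G(P)` is an ideal of the center `Z(FG)` contained in `I_G(P)`. -/
theorem stmt_9 (F : Type*) [Field F] (p : ℕ) [Fact p.Prime] [CharP F p]
    (G : Type*) [Group G] [Fintype G] (P : Subgroup G) (hP : IsPGroup p P) :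
    (∀ z ∈ IGPlt F p G P, z ∈ Subalgebra.center F (MonoidAlgebra F G)) ∧
    (∀ a ∈ Subalgebra.center F (MonoidAlgebra F G), ∀ z ∈ IGPlt F p G P,
      a * z ∈ IGPlt F p G P) ∧
    IGPlt F p G P ≤ IGP F p G P :=
  stmt_9_general F p G P
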